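/- Let A_η be the amplitude-damping channel on qubits, acting as A_η([[1−β, γ],[γ*, β]]) = [[1−ηβ, √η γ],[√η γ*, ηβ]] with 0 ≤ η ≤ 1. For any binary discrimination game g = diag(g_0, 1−g_0) with 1/2 ≤ g_0 ≤ 1, U(A_η, g) = (1 + √(1 − 4g_0(1−η) + 4g_0²(1−η)))/2, attained by the orthonormal encoding |ψ_0⟩ = √g_0 |0⟩ + √(1−g_0)|1⟩, |ψ_1⟩ = √(1−g_0)|0⟩ − √g_0 |1⟩. -/

import Mathlib

open Matrix Kronecker
open scoped ComplexOrder

noncomputable section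

variable {n : Type*} [Fintype n] [DecidableEq n]

/-- A density operator: positive semidefinite with unit trace. -/
def IsDensity (ρ : Matrix n n ℂ) : Prop := ρ.PosSemidef ∧ ρ.trace = 1

/-- A POVM: positive semidefinite effects summing to the identity. -/
def IsPOVM {m : ℕ} (π : Fin m → Matrix n n ℂ) : Prop :=
  (∀ y, (π y).PosSemidef) ∧ ∑ y, π y = 1

/-- The Choi matrix of a map on matrices. -/
def choi {p q : Type*} [Fintype p] [DecidableEq p] [Fintype q] [DecidableEq q]
    (Φ : Matrix p p ℂ → Matrix q q ℂ) : Matrix (p × q) (p × q) ℂ :=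
  ∑ i, ∑ j, (Matrix.single i j (1 : ℂ)) ⊗ₖ (Φ (Matrix.single i j (1 : ℂ)))

/-- Completely positive trace preserving linear map. -/
def IsCPTP {p q : Type*} [Fintype p] [DecidableEq p] [Fintype q] [DecidableEq q]
    (Φ : Matrix p p ℂ → Matrix q q ℂ) : Prop :=
  IsLinearMap ℂ Φ ∧ (choi Φ).PosSemidef ∧ ∀ ρ, (Φ ρ).trace = ρ.trace

/-- The average payoff of game `g`, channel `Φ`, encoding `ρ`, decoding `π`. -/
def payoff {p q : Type*} [Fintype p] [DecidableEq p] [Fintype q] [DecidableEq q]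
    {nn m : ℕ} (g : Fin nn → Fin m → ℝ) (Φ : Matrix p p ℂ → Matrix q q ℂ)
    (ρ : Fin nn → Matrix p p ℂ) (π : Fin m → Matrix q q ℂ) : ℝ :=
  ∑ x, ∑ y, ((Φ (ρ x) * π y).trace).re * g x y

/-- The communication utility of channel `Φ` for game `g`. -/
def utility {p q : Type*} [Fintype p] [DecidableEq p] [Fintype q] [DecidableEq q]
    {nn m : ℕ} (g : Fin nn → Fin m → ℝ) (Φ : Matrix p p ℂ → Matrix q q ℂ) : ℝ :=
  sSup {u : ℝ | ∃ ρ π, (∀ x, IsDensity (ρ x)) ∧ IsPOVM π ∧ u = payoff g Φ ρ π}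

/-- The trace norm (sum of singular values). -/
def traceNorm (A : Matrix n n ℂ) : ℝ :=
  ∑ i, Real.sqrt ((Matrix.posSemidef_conjTranspose_mul_self A).1.eigenvalues i)

/-- Helstrom utility of a channel for the binary discrimination game diag(g₀, 1-g₀). -/
def helstromUtility {p q : Type*} [Fintype p] [DecidableEq p] [Fintype q] [DecidableEq q]
    (Φ : Matrix p p ℂ → Matrix q q ℂ) (g₀ : ℝ) : ℝ :=
  sSup {u : ℝ | ∃ ρ₀ ρ₁, IsDensity ρ₀ ∧ IsDensity ρ₁ ∧
    u = (1 + traceNorm ((g₀ : ℂ) • Φ ρ₀ - ((1 - g₀ : ℝ) : ℂ) • Φ ρ₁)) / 2}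

/-- The amplitude-damping channel on qubits. -/
def ampDamp (η : ℝ) (ρ : Matrix (Fin 2) (Fin 2) ℂ) : Matrix (Fin 2) (Fin 2) ℂ :=
  !![ρ 0 0 + ((1 - η : ℝ) : ℂ) * ρ 1 1, (Real.sqrt η : ℂ) * ρ 0 1;
     (Real.sqrt η : ℂ) * ρ 1 0, (η : ℂ) * ρ 1 1]

/-!
Write `g₀ A_η ρ₀ - (1 - g₀) A_η ρ₁ = A_η M` with `M = g₀ ρ₀ - (1 - g₀) ρ₁`. A Hermitian
`2 × 2` matrix `X` has `‖X‖₁ = √((tr X)² + 4 max 0 (-det X))`, and `tr (A_η M) = 2 g₀ - 1` does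
not depend on the states, so the whole problem is a lower bound on `det (A_η M)`. One computes
`det (A_η M) = η det M + η (1 - η) M₁₁²`, and for qubit states
`det (p ρ₀ - q ρ₁) + p q = p² det ρ₀ + q² det ρ₁ + p q tr (ρ₀ ρ₁) ≥ 0`.
Hence `det (A_η M) ≥ -η g₀ (1 - g₀)`, with equality for the orthonormal encoding, for which
`M₁₁ = 0` and `det M = -g₀ (1 - g₀)`.
-/

/-- `tr (A * B) = 1ᴴ (A ⊙ Bᵀ) 1`, so this is the Schur product theorem. -/
theorem Matrix.PosSemidef.trace_mul_nonneg {m : Type*} [Fintype m] {A B : Matrix m m ℂ}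
    (hA : A.PosSemidef) (hB : B.PosSemidef) : 0 ≤ (A * B).trace := by
  have h := (hA.hadamard hB.transpose).dotProduct_mulVec_nonneg 1
  convert h using 1
  simp [trace, mul_apply, dotProduct, mulVec]

theorem Matrix.det_smul_sub_smul_fin_two (a b : ℂ) (A B : Matrix (Fin 2) (Fin 2) ℂ) :
    (a • A - b • B).det
      = a ^ 2 * A.det + b ^ 2 * B.det - a * b * (A.trace * B.trace - (A * B).trace) := by
  simp only [det_fin_two, Matrix.sub_apply, Matrix.smul_apply, smul_eq_mul, trace_fin_two,
    mul_apply, Fin.sum_univ_two]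
  ring

theorem Matrix.trace_mul_self_fin_two (A : Matrix (Fin 2) (Fin 2) ℂ) :
    (A * A).trace = A.trace ^ 2 - 2 * A.det := by
  simp only [trace_fin_two, mul_apply, Fin.sum_univ_two, det_fin_two]
  ring

theorem IsDensity.neg_mul_le_det_smul_sub_smul {ρ σ : Matrix (Fin 2) (Fin 2) ℂ}
    (hρ : IsDensity ρ) (hσ : IsDensity σ) {p q : ℝ} (hp : 0 ≤ p) (hq : 0 ≤ q) :
    -((p * q : ℝ) : ℂ) ≤ ((p : ℂ) • ρ - (q : ℂ) • σ).det := by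
  rw [det_smul_sub_smul_fin_two, hρ.2, hσ.2, ← sub_nonneg]
  have hp' : (0 : ℂ) ≤ p := by exact_mod_cast hp
  have hq' : (0 : ℂ) ≤ q := by exact_mod_cast hq
  have hρdet := hρ.1.det_nonneg
  have hσdet := hσ.1.det_nonneg
  have hρσ := hρ.1.trace_mul_nonneg hσ.1
  calc (0 : ℂ) ≤ p ^ 2 * ρ.det + q ^ 2 * σ.det + p * q * (ρ * σ).trace := by positivity
    _ = _ := by push_cast; ring

theorem traceNorm_fin_two (A : Matrix (Fin 2) (Fin 2) ℂ) :
    traceNorm A = √((Aᴴ * A).trace.re + 2 * ‖A.det‖) := by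
  have hA := posSemidef_conjTranspose_mul_self A
  set e := hA.1.eigenvalues
  have he0 : 0 ≤ e 0 := hA.eigenvalues_nonneg 0
  have he1 : 0 ≤ e 1 := hA.eigenvalues_nonneg 1
  have htrace : (Aᴴ * A).trace.re = e 0 + e 1 := by
    simp [hA.1.trace_eq_sum_eigenvalues, Fin.sum_univ_two, e]
  have hdet : ‖A.det‖ ^ 2 = e 0 * e 1 := by
    have h := hA.1.det_eq_prod_eigenvalues
    rw [det_mul, det_conjTranspose, Fin.prod_univ_two] at h
    rw [← Complex.ofReal_inj, Complex.sq_norm, Complex.normSq_eq_conj_mul_self]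
    simpa using h
  have hsqrt : ‖A.det‖ = √(e 0) * √(e 1) := by
    rw [← Real.sqrt_mul he0, ← hdet, Real.sqrt_sq (norm_nonneg _)]
  rw [traceNorm, Fin.sum_univ_two, htrace, hsqrt,
    ← Real.sqrt_sq (by positivity : 0 ≤ √(e 0) + √(e 1))]
  congr 1
  rw [add_sq, Real.sq_sqrt he0, Real.sq_sqrt he1]
  ring

theorem Matrix.IsHermitian.traceNorm_fin_two {A : Matrix (Fin 2) (Fin 2) ℂ}
    (hA : A.IsHermitian) :
    traceNorm A = √(A.trace.re ^ 2 + 4 * max 0 (-A.det.re)) := by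
  have htrace : A.trace.im = 0 := by
    rw [← Complex.conj_eq_iff_im, ← Complex.star_def, ← trace_conjTranspose, hA.eq]
  have hdet : A.det.im = 0 := by
    rw [← Complex.conj_eq_iff_im, ← Complex.star_def, ← det_conjTranspose, hA.eq]
  have hnorm : ‖A.det‖ = |A.det.re| := by
    rw [← Complex.re_add_im A.det, hdet]; simp
  rw [_root_.traceNorm_fin_two, hA.eq, trace_mul_self_fin_two, hnorm]
  congr 1
  simp only [sq, Complex.sub_re, Complex.mul_re, htrace, mul_zero, sub_zero, Complex.re_ofNat,
    Complex.im_ofNat, zero_mul]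
  rcases le_total 0 A.det.re with h | h
  · rw [abs_of_nonneg h, max_eq_left (by linarith)]; ring
  · rw [abs_of_nonpos h, max_eq_right (by linarith)]; ring

theorem ampDamp_smul_sub_smul (η : ℝ) (a b : ℂ) (ρ σ : Matrix (Fin 2) (Fin 2) ℂ) :
    ampDamp η (a • ρ - b • σ) = a • ampDamp η ρ - b • ampDamp η σ := by
  ext i j
  fin_cases i <;> fin_cases j <;>
    simp only [ampDamp, Matrix.sub_apply, Matrix.smul_apply, smul_eq_mul, of_apply, cons_val',
      cons_val_zero, cons_val_one, cons_val_fin_one, Fin.zero_eta, Fin.mk_one] <;> ring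

theorem conjTranspose_ampDamp (η : ℝ) (M : Matrix (Fin 2) (Fin 2) ℂ) :
    (ampDamp η M)ᴴ = ampDamp η Mᴴ := by
  ext i j
  fin_cases i <;> fin_cases j <;> simp [ampDamp]

theorem isHermitian_ampDamp (η : ℝ) {M : Matrix (Fin 2) (Fin 2) ℂ} (hM : M.IsHermitian) :
    (ampDamp η M).IsHermitian := by
  rw [IsHermitian, conjTranspose_ampDamp, hM.eq]

theorem trace_ampDamp (η : ℝ) (M : Matrix (Fin 2) (Fin 2) ℂ) :
    (ampDamp η M).trace = M.trace := by
  simp only [ampDamp, trace_fin_two, of_apply, cons_val', cons_val_zero, cons_val_one,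
    cons_val_fin_one, Complex.ofReal_sub, Complex.ofReal_one]
  ring

theorem det_ampDamp {η : ℝ} (hη : 0 ≤ η) (M : Matrix (Fin 2) (Fin 2) ℂ) :
    (ampDamp η M).det = η * M.det + η * (1 - η) * M 1 1 ^ 2 := by
  have h : (√η : ℂ) * √η = η := by exact_mod_cast Real.mul_self_sqrt hη
  rw [ampDamp, det_fin_two_of, det_fin_two]
  push_cast
  linear_combination (-(M 0 1 * M 1 0)) * h

theorem Matrix.IsHermitian.mul_re_det_le_re_det_ampDamp {η : ℝ} (hη0 : 0 ≤ η) (hη1 : η ≤ 1)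
    {M : Matrix (Fin 2) (Fin 2) ℂ} (hM : M.IsHermitian) :
    η * M.det.re ≤ (ampDamp η M).det.re := by
  rw [det_ampDamp hη0, ← hM.coe_re_apply_self 1]
  have h1η : 0 ≤ 1 - η := by linarith
  have hdamp : 0 ≤ η * (1 - η) * (M 1 1).re ^ 2 := by positivity
  simpa [← Complex.ofReal_pow] using hdamp

theorem traceNorm_smul_ampDamp_sub_smul_ampDamp_le {η : ℝ} (hη0 : 0 ≤ η) (hη1 : η ≤ 1)
    {ρ σ : Matrix (Fin 2) (Fin 2) ℂ} (hρ : IsDensity ρ) (hσ : IsDensity σ)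
    {p q : ℝ} (hp : 0 ≤ p) (hq : 0 ≤ q) :
    traceNorm ((p : ℂ) • ampDamp η ρ - (q : ℂ) • ampDamp η σ)
      ≤ √((p - q) ^ 2 + 4 * (η * (p * q))) := by
  set M := (p : ℂ) • ρ - (q : ℂ) • σ
  have hM : M.IsHermitian :=
    (hρ.1.1.smul (Complex.conj_ofReal p)).sub (hσ.1.1.smul (Complex.conj_ofReal q))
  have htrace : M.trace = ((p - q : ℝ) : ℂ) := by
    simp [M, trace_sub, trace_smul, hρ.2, hσ.2]
  have hdet : -(p * q) ≤ M.det.re :=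
    (Complex.le_def.mp (hρ.neg_mul_le_det_smul_sub_smul hσ hp hq)).1
  rw [← ampDamp_smul_sub_smul, (isHermitian_ampDamp η hM).traceNorm_fin_two, trace_ampDamp,
    htrace, Complex.ofReal_re]
  have hdamp := hM.mul_re_det_le_re_det_ampDamp hη0 hη1
  gcongr
  exact max_le (by positivity) (by nlinarith)

theorem vecMulVec_star_fin_two (a b : ℝ) :
    vecMulVec ![(a : ℂ), b] (star ![(a : ℂ), b]) = !![(a ^ 2 : ℂ), a * b; a * b, b ^ 2] := by
  ext i j
  fin_cases i <;> fin_cases j <;> simp [vecMulVec_apply, sq, mul_comm]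

theorem isDensity_vecMulVec_star_fin_two {a b : ℝ} (h : a ^ 2 + b ^ 2 = 1) :
    IsDensity (vecMulVec ![(a : ℂ), b] (star ![(a : ℂ), b])) := by
  refine ⟨posSemidef_vecMulVec_self_star _, ?_⟩
  rw [vecMulVec_star_fin_two, trace_fin_two]
  simpa using congrArg Complex.ofReal h

theorem traceNorm_smul_ampDamp_sub_smul_ampDamp_optimal {η g : ℝ} (hη : 0 ≤ η) (hg0 : 0 ≤ g)
    (hg1 : g ≤ 1) :
    traceNorm ((g : ℂ) • ampDamp η
          (vecMulVec ![(√g : ℂ), (√(1 - g) : ℂ)] (star ![(√g : ℂ), (√(1 - g) : ℂ)]))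
        - ((1 - g : ℝ) : ℂ) • ampDamp η
          (vecMulVec ![(√(1 - g) : ℂ), -(√g : ℂ)] (star ![(√(1 - g) : ℂ), -(√g : ℂ)])))
      = √((g - (1 - g)) ^ 2 + 4 * (η * (g * (1 - g)))) := by
  have hg : (√g : ℂ) ^ 2 = g := by exact_mod_cast Real.sq_sqrt hg0
  have hg' : (√(1 - g) : ℂ) ^ 2 = 1 - g := by exact_mod_cast Real.sq_sqrt (sub_nonneg.mpr hg1)
  set M : Matrix (Fin 2) (Fin 2) ℂ :=
    !![((g - (1 - g) : ℝ) : ℂ), (√g * √(1 - g) : ℝ); (√g * √(1 - g) : ℝ), 0]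
  have hM : (g : ℂ) • vecMulVec ![(√g : ℂ), (√(1 - g) : ℂ)] (star ![(√g : ℂ), (√(1 - g) : ℂ)])
      - ((1 - g : ℝ) : ℂ) • vecMulVec ![(√(1 - g) : ℂ), -(√g : ℂ)]
          (star ![(√(1 - g) : ℂ), -(√g : ℂ)]) = M := by
    rw [← Complex.ofReal_neg, vecMulVec_star_fin_two, vecMulVec_star_fin_two]
    ext i j
    fin_cases i <;> fin_cases j <;>
      simp only [M, Matrix.sub_apply, Matrix.smul_apply, smul_eq_mul, of_apply, cons_val',
        cons_val_zero, cons_val_one, cons_val_fin_one, Fin.zero_eta, Fin.mk_one] <;>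
      push_cast [neg_sq, hg, hg'] <;> ring
  have hMherm : M.IsHermitian := by
    ext i j
    fin_cases i <;> fin_cases j <;> simp [M]
  have hdet : (ampDamp η M).det.re = -(η * (g * (1 - g))) := by
    rw [det_ampDamp hη, det_fin_two_of]
    simp only [M, of_apply, cons_val', cons_val_one, empty_val', cons_val_fin_one]
    push_cast
    simp [← Real.sqrt_mul hg0, Real.mul_self_sqrt (mul_nonneg hg0 (sub_nonneg.mpr hg1))]
  rw [← ampDamp_smul_sub_smul, hM, (isHermitian_ampDamp η hMherm).traceNorm_fin_two,
    trace_ampDamp, hdet, neg_neg, max_eq_right (mul_nonneg hη (mul_nonneg hg0 (by linarith)))]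
  simp [M, trace_fin_two]

/-- binary discrimination utility of the amplitude-damping channel. -/
theorem stmt11 (η g₀ : ℝ) (hη0 : 0 ≤ η) (hη1 : η ≤ 1) (hg0 : 1 / 2 ≤ g₀) (hg1 : g₀ ≤ 1) :
    helstromUtility (ampDamp η) g₀
      = (1 + Real.sqrt (1 - 4 * g₀ * (1 - η) + 4 * g₀ ^ 2 * (1 - η))) / 2 ∧
    (1 + traceNorm ((g₀ : ℂ) • ampDamp η
          (Matrix.vecMulVec ![(Real.sqrt g₀ : ℂ), (Real.sqrt (1 - g₀) : ℂ)]
            (star ![(Real.sqrt g₀ : ℂ), (Real.sqrt (1 - g₀) : ℂ)]))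
        - ((1 - g₀ : ℝ) : ℂ) • ampDamp η
          (Matrix.vecMulVec ![(Real.sqrt (1 - g₀) : ℂ), -(Real.sqrt g₀ : ℂ)]
            (star ![(Real.sqrt (1 - g₀) : ℂ), -(Real.sqrt g₀ : ℂ)])))) / 2
      = helstromUtility (ampDamp η) g₀ := by
  have hg₀ : 0 ≤ g₀ := by linarith
  have hq : 0 ≤ 1 - g₀ := by linarith
  have htarget : 1 - 4 * g₀ * (1 - η) + 4 * g₀ ^ 2 * (1 - η)
      = (g₀ - (1 - g₀)) ^ 2 + 4 * (η * (g₀ * (1 - g₀))) := by ring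
  have hopt := traceNorm_smul_ampDamp_sub_smul_ampDamp_optimal hη0 hg₀ hg1
  have hU : helstromUtility (ampDamp η) g₀
      = (1 + √((g₀ - (1 - g₀)) ^ 2 + 4 * (η * (g₀ * (1 - g₀))))) / 2 := by
    refine IsGreatest.csSup_eq ⟨⟨_, _, ?_, ?_, by rw [hopt]⟩, ?_⟩
    · exact isDensity_vecMulVec_star_fin_two (by rw [Real.sq_sqrt hg₀, Real.sq_sqrt hq]; ring)
    · simpa using isDensity_vecMulVec_star_fin_two (a := √(1 - g₀)) (b := -√g₀)
        (by rw [neg_sq, Real.sq_sqrt hg₀, Real.sq_sqrt hq]; ring)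
    · rintro _ ⟨ρ₀, ρ₁, h₀, h₁, rfl⟩
      have hle := traceNorm_smul_ampDamp_sub_smul_ampDamp_le hη0 hη1 h₀ h₁ hg₀ hq
      linarith
  rw [htarget, hU, hopt]
  exact ⟨rfl, rfl⟩

end
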